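/- arXiv:1601.05909 — 10 statements merged into one kernel-verified Lean document; each statement's English description precedes it below -/
import Mathlib

section
/- If every temporal edge of a temporal graph has traversal time λ ≥ 1, then the transformed graph G of the temporal graph is a directed acyclic graph: there is no nonempty directed cycle in G (equivalently, for distinct vertices x, y of G it is impossible that both x →_G y and y →_G x). -/
/-- A copy of an original vertex: `inn v t` is the vertex `in(v, t)` and
`out v t` is the vertex `out(v, t)` of the transformed graph. -/
inductive Copy (V : Type*) where
  | inn : V → ℕ → Copy V
  | out : V → ℕ → Copy V

/-- The original vertex of which a vertex of the transformed graph is a copy. -/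
def Copy.base {V : Type*} : Copy V → V
  | .inn v _ => v
  | .out v _ => v

/-- The time stamp of a vertex of the transformed graph. -/
def Copy.time {V : Type*} : Copy V → ℕ
  | .inn _ t => t
  | .out _ t => t

/-- `T_in(v)`: the set of arrival times of in-edges of `v`. -/
def Tin {V : Type*} (E : Finset (V × V × ℕ × ℕ)) (v : V) : Set ℕ :=
  {s | ∃ u t l, (u, v, t, l) ∈ E ∧ s = t + l}

/-- `T_out(v)`: the set of starting times of out-edges of `v`. -/
def Tout {V : Type*} (E : Finset (V × V × ℕ × ℕ)) (v : V) : Set ℕ :=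
  {t | ∃ u l, (v, u, t, l) ∈ E}

/-- The edge relation of the transformed graph `G` of the temporal graph with
temporal edge set `E`. -/
inductive GEdge {V : Type*} (E : Finset (V × V × ℕ × ℕ)) : Copy V → Copy V → Prop where
  | in_in {v : V} {t t' : ℕ} : t ∈ Tin E v → t' ∈ Tin E v → t < t' →
      (∀ s ∈ Tin E v, s ≤ t ∨ t' ≤ s) → GEdge E (.inn v t) (.inn v t')
  | out_out {v : V} {t t' : ℕ} : t ∈ Tout E v → t' ∈ Tout E v → t < t' →
      (∀ s ∈ Tout E v, s ≤ t ∨ t' ≤ s) → GEdge E (.out v t) (.out v t')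
  | in_out {v : V} {t s : ℕ} : t ∈ Tin E v → s ∈ Tout E v → t ≤ s →
      (∀ s' ∈ Tout E v, t ≤ s' → s ≤ s') →
      (∀ t' ∈ Tin E v, t' ≤ s → t' ≤ t) →
      GEdge E (.inn v t) (.out v s)
  | cross {u v : V} {t l : ℕ} : (u, v, t, l) ∈ E → GEdge E (.out u t) (.inn v (t + l))

/-- Membership in the vertex set of the transformed graph. -/
def IsVert {V : Type*} (E : Finset (V × V × ℕ × ℕ)) : Copy V → Prop
  | .inn v t => t ∈ Tin E v
  | .out v t => t ∈ Tout E v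

/-! Time stamps never decrease along an edge of the transformed graph: cross edges add `λ ≥ 1`,
chain edges go to a later time, and an edge `in(v, t) → out(v, s)` has `t ≤ s`. Ranking
`out(v, t)` just above `in(v, t)` breaks the only possible tie, so the rank increases strictly
along every edge and no cycle can exist. -/

def Copy.rank {V : Type*} : Copy V → ℕ
  | .inn _ t => 2 * t
  | .out _ t => 2 * t + 1

theorem GEdge.rank_lt {V : Type*} {E : Finset (V × V × ℕ × ℕ)}
    (hl : ∀ u v t l, (u, v, t, l) ∈ E → 1 ≤ l) {x y : Copy V} (h : GEdge E x y) :
    x.rank < y.rank := by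
  cases h with
  | in_in _ _ hlt _ | out_out _ _ hlt _ => simp only [Copy.rank]; omega
  | in_out _ _ hle _ _ => simp only [Copy.rank]; omega
  | cross hmem =>
    have := hl _ _ _ _ hmem
    simp only [Copy.rank]; omega

theorem transformed_graph_is_DAG {V : Type*} (E : Finset (V × V × ℕ × ℕ))
    (hl : ∀ u v t l, (u, v, t, l) ∈ E → 1 ≤ l) :
    ∀ x : Copy V, ¬ Relation.TransGen (GEdge E) x x := by
  intro x hx
  have hrank : Relation.TransGen (· < ·) x.rank x.rank :=
    Relation.TransGen.lift Copy.rank (fun _ _ h => GEdge.rank_lt hl h) _ _ hx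
  rw [Relation.transGen_eq_self] at hrank
  exact lt_irrefl _ hrank
end

section
/- Let G be the transformed graph of a temporal graph and let v ∈ 𝒱. Then: (a) for all t₁, t₂ ∈ T_in(v), in(v, t₁) →_G in(v, t₂) if and only if t₁ ≤ t₂; (b) for all t₁, t₂ ∈ T_out(v), out(v, t₁) →_G out(v, t₂) if and only if t₁ ≤ t₂; (c) for all t₁ ∈ T_in(v) and t₂ ∈ T_out(v), in(v, t₁) →_G out(v, t₂) if and only if t₁ ≤ t₂. -/
/-
Edges of the transformed graph never decrease the time stamp, which gives the "only if" directions.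
Conversely, a vertex's in-copies (resp. out-copies) are chained by edges between consecutive time
stamps. To get from `in(v, t₁)` to `out(v, t₂)` with `t₁ ≤ t₂`, climb to the latest in-copy
`in(v, t)` with `t ≤ t₂`; its `in → out` edge lands at an out-copy no later than `t₂`.
-/

open Function Relation

theorem Nat.reflTransGen_of_consecutive {S : Set ℕ} {r : ℕ → ℕ → Prop}
    (hr : ∀ a ∈ S, ∀ b ∈ S, a < b → (∀ s ∈ S, s ≤ a ∨ b ≤ s) → r a b)
    {a b : ℕ} (ha : a ∈ S) (hb : b ∈ S) (hab : a ≤ b) : ReflTransGen r a b := by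
  induction b using Nat.strong_induction_on with
  | _ b ih =>
  rcases hab.eq_or_lt with rfl | hlt
  · rfl
  obtain ⟨c, ⟨hcS, hac, hcb⟩, hc⟩ :=
    BddAbove.exists_isGreatest_of_nonempty (S := {s | s ∈ S ∧ a ≤ s ∧ s < b})
      ⟨b, fun s hs ↦ hs.2.2.le⟩ ⟨a, ha, le_rfl, hlt⟩
  have hgap : ∀ s ∈ S, s ≤ c ∨ b ≤ s := fun s hs ↦ by
    by_contra! h
    exact (hc ⟨hs, hac.trans h.1.le, h.2⟩).not_gt h.1
  exact (ih c hcb hcS hac).tail (hr c hcS b hb hcb hgap)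

namespace GEdge

variable {V : Type*} {E : Finset (V × V × ℕ × ℕ)} {v : V}

theorem time_le {a b : Copy V} (h : GEdge E a b) : a.time ≤ b.time := by
  cases h <;> simp only [Copy.time] <;> omega

theorem reflTransGen_time_le {a b : Copy V} (h : ReflTransGen (GEdge E) a b) :
    a.time ≤ b.time := by
  simpa only [reflTransGen_eq_self] using h.lift Copy.time fun _ _ e ↦ e.time_le

theorem reflTransGen_inn {t₁ t₂ : ℕ} (h₁ : t₁ ∈ Tin E v) (h₂ : t₂ ∈ Tin E v) (hle : t₁ ≤ t₂) :
    ReflTransGen (GEdge E) (.inn v t₁) (.inn v t₂) :=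
  (Nat.reflTransGen_of_consecutive (r := GEdge E on Copy.inn v)
    (fun _ ha _ hb ↦ in_in ha hb) h₁ h₂ hle).lift _ fun _ _ e ↦ e

theorem reflTransGen_out {t₁ t₂ : ℕ} (h₁ : t₁ ∈ Tout E v) (h₂ : t₂ ∈ Tout E v)
    (hle : t₁ ≤ t₂) : ReflTransGen (GEdge E) (.out v t₁) (.out v t₂) :=
  (Nat.reflTransGen_of_consecutive (r := GEdge E on Copy.out v)
    (fun _ ha _ hb ↦ out_out ha hb) h₁ h₂ hle).lift _ fun _ _ e ↦ e

theorem exists_inn_out_between {t₁ t₂ : ℕ} (h₁ : t₁ ∈ Tin E v) (h₂ : t₂ ∈ Tout E v)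
    (hle : t₁ ≤ t₂) : ∃ t ∈ Tin E v, ∃ s ∈ Tout E v,
      t₁ ≤ t ∧ s ≤ t₂ ∧ GEdge E (.inn v t) (.out v s) := by
  obtain ⟨t, ⟨htin, ht₂⟩, ht⟩ :=
    BddAbove.exists_isGreatest_of_nonempty (S := {t | t ∈ Tin E v ∧ t ≤ t₂})
      ⟨t₂, fun _ h ↦ h.2⟩ ⟨t₁, h₁, hle⟩
  obtain ⟨⟨hsout, hts⟩, hs⟩ := isLeast_csInf (s := {s | s ∈ Tout E v ∧ t ≤ s}) ⟨t₂, h₂, ht₂⟩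
  have hst₂ : sInf {s | s ∈ Tout E v ∧ t ≤ s} ≤ t₂ := hs ⟨h₂, ht₂⟩
  refine ⟨t, htin, _, hsout, ht ⟨h₁, hle⟩, hst₂, in_out htin hsout hts ?_ ?_⟩
  · exact fun s' hs' hts' ↦ hs ⟨hs', hts'⟩
  · exact fun t' ht' ht's ↦ ht ⟨ht', ht's.trans hst₂⟩

end GEdge

theorem reach_within_copies_iff_le {V : Type*} (E : Finset (V × V × ℕ × ℕ)) (v : V) :
    (∀ t₁ ∈ Tin E v, ∀ t₂ ∈ Tin E v,
      (Relation.ReflTransGen (GEdge E) (.inn v t₁) (.inn v t₂) ↔ t₁ ≤ t₂)) ∧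
    (∀ t₁ ∈ Tout E v, ∀ t₂ ∈ Tout E v,
      (Relation.ReflTransGen (GEdge E) (.out v t₁) (.out v t₂) ↔ t₁ ≤ t₂)) ∧
    (∀ t₁ ∈ Tin E v, ∀ t₂ ∈ Tout E v,
      (Relation.ReflTransGen (GEdge E) (.inn v t₁) (.out v t₂) ↔ t₁ ≤ t₂)) := by
  refine ⟨fun t₁ h₁ t₂ h₂ ↦ ⟨GEdge.reflTransGen_time_le, GEdge.reflTransGen_inn h₁ h₂⟩,
    fun t₁ h₁ t₂ h₂ ↦ ⟨GEdge.reflTransGen_time_le, GEdge.reflTransGen_out h₁ h₂⟩,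
    fun t₁ h₁ t₂ h₂ ↦ ⟨GEdge.reflTransGen_time_le, fun hle ↦ ?_⟩⟩
  obtain ⟨t, ht, s, hs, ht₁, hs₂, e⟩ := GEdge.exists_inn_out_between h₁ h₂ hle
  exact ((GEdge.reflTransGen_inn h₁ ht ht₁).tail e).trans (GEdge.reflTransGen_out hs h₂ hs₂)
end

section
/- Let G be a directed graph on a finite vertex set with a chain cover ℂ (with injective rank function). For any vertices u and v: if there exist codes (x, y₁) ∈ RFcode(u) and (x, y₂) ∈ RLcode(v) with the same first component x and y₁ ≤ y₂, then u → v. -/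
/-- A chain cover of the directed graph on `V` with edge relation `step`:
a finite family of chains (nonempty lists of pairwise-distinct vertices,
each vertex reaching the next) such that every vertex lies in exactly one
chain, together with an injective rank function on the chains. -/
structure ChainCover {V : Type*} (step : V → V → Prop) where
  chains : Finset (List V)
  ne : ∀ C ∈ chains, C ≠ []
  nodup : ∀ C ∈ chains, C.Nodup
  chain : ∀ C ∈ chains, C.Chain' (Relation.ReflTransGen step)
  cover : ∀ v : V, ∃! C, C ∈ chains ∧ v ∈ C
  rank : List V → ℕ
  rank_inj : ∀ C₁ ∈ chains, ∀ C₂ ∈ chains, rank C₁ = rank C₂ → C₁ = C₂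

/-- `RFcode(v)`: the set of chain codes `(rank(C), position of first_v(C))`
of the first vertex reachable from `v` in each chain reachable from `v`. -/
def RFcode {V : Type*} [DecidableEq V] (step : V → V → Prop) (cc : ChainCover step)
    (v : V) : Set (ℕ × ℕ) :=
  {c | ∃ C ∈ cc.chains, ∃ w ∈ C, Relation.ReflTransGen step v w ∧
    (∀ w' ∈ C, Relation.ReflTransGen step v w' → C.idxOf w ≤ C.idxOf w') ∧
    c = (cc.rank C, C.idxOf w)}

/-- `RLcode(v)`: the set of chain codes `(rank(C), position of last_v(C))`
of the last vertex that can reach `v` in each chain that can reach `v`. -/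
def RLcode {V : Type*} [DecidableEq V] (step : V → V → Prop) (cc : ChainCover step)
    (v : V) : Set (ℕ × ℕ) :=
  {c | ∃ C ∈ cc.chains, ∃ w ∈ C, Relation.ReflTransGen step w v ∧
    (∀ w' ∈ C, Relation.ReflTransGen step w' v → C.idxOf w' ≤ C.idxOf w) ∧
    c = (cc.rank C, C.idxOf w)}

/-- `top_k(S)`: the codes of `S` whose first component is among the `k`
smallest first components occurring in `S` (all of `S` if it has at most `k`
elements). -/
def topk (k : ℕ) (S : Set (ℕ × ℕ)) : Set (ℕ × ℕ) :=
  {c ∈ S | ({c' ∈ S | c'.1 < c.1}).ncard < k}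

theorem List.IsChain.rel_of_idxOf_le {α : Type*} [DecidableEq α] {R : α → α → Prop}
    [IsPreorder α R] {l : List α} (hl : l.IsChain R) {a b : α} (ha : a ∈ l) (hb : b ∈ l)
    (hab : l.idxOf a ≤ l.idxOf b) : R a b := by
  have hia : l.idxOf a < l.length := List.idxOf_lt_length_iff.mpr ha
  have hib : l.idxOf b < l.length := List.idxOf_lt_length_iff.mpr hb
  rcases hab.eq_or_lt with heq | hlt
  · rw [(List.idxOf_inj ha).mp heq]
    exact refl b
  · have := hl.pairwise.rel_get_of_lt (a := ⟨_, hia⟩) (b := ⟨_, hib⟩) hlt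
    rwa [List.idxOf_get, List.idxOf_get] at this

namespace ChainCover

variable {V : Type*} [DecidableEq V] {step : V → V → Prop} (cc : ChainCover step)

theorem exists_of_mem_RFcode {v : V} {x y : ℕ} (h : (x, y) ∈ RFcode step cc v) :
    ∃ C ∈ cc.chains, ∃ w ∈ C,
      Relation.ReflTransGen step v w ∧ cc.rank C = x ∧ C.idxOf w = y := by
  obtain ⟨C, hC, w, hw, hvw, -, hcode⟩ := h
  obtain ⟨rfl, rfl⟩ := Prod.mk.inj hcode
  exact ⟨C, hC, w, hw, hvw, rfl, rfl⟩

theorem exists_of_mem_RLcode {v : V} {x y : ℕ} (h : (x, y) ∈ RLcode step cc v) :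
    ∃ C ∈ cc.chains, ∃ w ∈ C,
      Relation.ReflTransGen step w v ∧ cc.rank C = x ∧ C.idxOf w = y := by
  obtain ⟨C, hC, w, hw, hwv, -, hcode⟩ := h
  obtain ⟨rfl, rfl⟩ := Prod.mk.inj hcode
  exact ⟨C, hC, w, hw, hwv, rfl, rfl⟩

end ChainCover

theorem code_match_implies_reach_general {V : Type*} [DecidableEq V]
    (step : V → V → Prop) (cc : ChainCover step) (u v : V) (x y₁ y₂ : ℕ)
    (h1 : (x, y₁) ∈ RFcode step cc u) (h2 : (x, y₂) ∈ RLcode step cc v)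
    (h : y₁ ≤ y₂) :
    Relation.ReflTransGen step u v := by
  obtain ⟨C, hC, w₁, hw₁, huw₁, hrank₁, rfl⟩ := cc.exists_of_mem_RFcode h1
  obtain ⟨C', hC', w₂, hw₂, hw₂v, hrank₂, rfl⟩ := cc.exists_of_mem_RLcode h2
  obtain rfl : C = C' := cc.rank_inj C hC C' hC' (hrank₁.trans hrank₂.symm)
  have hw₁w₂ : Relation.ReflTransGen step w₁ w₂ := (cc.chain C hC).rel_of_idxOf_le hw₁ hw₂ h
  exact (huw₁.trans hw₁w₂).trans hw₂v

theorem code_match_implies_reach {V : Type*} [Fintype V] [DecidableEq V]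
    (step : V → V → Prop) (cc : ChainCover step) (u v : V) (x y₁ y₂ : ℕ)
    (h1 : (x, y₁) ∈ RFcode step cc u) (h2 : (x, y₂) ∈ RLcode step cc v)
    (h : y₁ ≤ y₂) :
    Relation.ReflTransGen step u v :=
  code_match_implies_reach_general step cc u v x y₁ y₂ h1 h2 h
end

section
/- Let G be a directed graph on a finite vertex set with a chain cover ℂ (with injective rank function), let k ≥ 1, and for every vertex w set L_out(w) = top_k(RFcode(w)). Let u, v be vertices. If either (1) there exists (x_r, y_r) ∈ L_out(v) such that no code in L_out(u) has first component x_r, and there exists (x_s, y_s) ∈ L_out(u) with x_s > x_r; or (2) there exist (x, y_r) ∈ L_out(v) and (x, y_w) ∈ L_out(u) with the same first component x and y_w > y_r; then u cannot reach v (¬(u → v)). -/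
/-!
If `u` reaches `v`, then everything reachable from `v` is reachable from `u`, so every chain
reached from `v` is reached from `u`, and at a position no later than from `v`; since the code
of `first_u(C)` is determined by the rank of `C`, condition (2) is impossible. In condition (1)
the chain of rank `x_r` thus has a code in `RFcode(u)`, and as `L_out(u)` already contains a code
of larger rank `x_s`, it contains every code of `RFcode(u)` of rank at most `x_s`, including the
one of rank `x_r`.
-/

open Relation

lemma mem_topk_of_fst_le {k : ℕ} {S : Set (ℕ × ℕ)} (hS : S.Finite) {c c' : ℕ × ℕ}
    (hc : c ∈ topk k S) (hc' : c' ∈ S) (hle : c'.1 ≤ c.1) : c' ∈ topk k S :=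
  ⟨hc', (Set.ncard_le_ncard (fun _ hd => And.imp_right (·.trans_le hle) hd)
    (hS.subset (Set.sep_subset _ _))).trans_lt hc.2⟩

section RFcode

variable {V : Type*} [DecidableEq V] {step : V → V → Prop} (cc : ChainCover step)

lemma RFcode_finite (v : V) : (RFcode step cc v).Finite := by
  refine (cc.chains.finite_toSet.biUnion fun C _ =>
    (C.toFinset.image fun w => (cc.rank C, C.idxOf w)).finite_toSet).subset ?_
  rintro _ ⟨C, hC, w, hw, -, -, rfl⟩
  exact Set.mem_biUnion hC (by simpa using ⟨w, hw, rfl⟩)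

lemma RFcode_snd_unique {v : V} {x y y' : ℕ} (h : (x, y) ∈ RFcode step cc v)
    (h' : (x, y') ∈ RFcode step cc v) : y = y' := by
  obtain ⟨C, hC, w, hw, hvw, hmin, hcode⟩ := h
  obtain ⟨C', hC', w', hw', hvw', hmin', hcode'⟩ := h'
  obtain ⟨hx, rfl⟩ := Prod.mk.inj hcode
  obtain ⟨hx', rfl⟩ := Prod.mk.inj hcode'
  obtain rfl : C = C' := cc.rank_inj C hC C' hC' (hx.symm.trans hx')
  exact le_antisymm (hmin w' hw' hvw') (hmin' w hw hvw)

lemma RFcode_mono {u v : V} (huv : ReflTransGen step u v) {x y : ℕ}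
    (h : (x, y) ∈ RFcode step cc v) : ∃ y' ≤ y, (x, y') ∈ RFcode step cc u := by
  classical
  obtain ⟨C, hC, w, hw, hvw, -, hcode⟩ := h
  obtain ⟨rfl, rfl⟩ := Prod.mk.inj hcode
  obtain ⟨w₀, hw₀, hmin⟩ := (C.toFinset.filter (ReflTransGen step u ·)).exists_min_image
    C.idxOf ⟨w, by simpa using ⟨hw, huv.trans hvw⟩⟩
  simp only [Finset.mem_filter, List.mem_toFinset, and_imp] at hw₀ hmin
  exact ⟨C.idxOf w₀, hmin w hw (huv.trans hvw), C, hC, w₀, hw₀.1, hw₀.2, hmin, rfl⟩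

end RFcode

theorem out_label_prune_correct_general {V : Type*} [DecidableEq V]
    (step : V → V → Prop) (cc : ChainCover step) (k : ℕ) (u v : V)
    (h : (∃ xr yr, (xr, yr) ∈ topk k (RFcode step cc v) ∧
            (∀ y, (xr, y) ∉ topk k (RFcode step cc u)) ∧
            ∃ xs ys, (xs, ys) ∈ topk k (RFcode step cc u) ∧ xr < xs) ∨
         (∃ x yr yw, (x, yr) ∈ topk k (RFcode step cc v) ∧
            (x, yw) ∈ topk k (RFcode step cc u) ∧ yr < yw)) :
    ¬ Relation.ReflTransGen step u v := by
  intro huv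
  rcases h with ⟨xr, yr, hvr, hnot, xs, ys, hus, hlt⟩ | ⟨x, yr, yw, hvr, huw, hlt⟩
  · obtain ⟨y', -, hy'⟩ := RFcode_mono cc huv hvr.1
    exact hnot y' (mem_topk_of_fst_le (RFcode_finite cc u) hus hy' hlt.le)
  · obtain ⟨y', hy'r, hy'⟩ := RFcode_mono cc huv hvr.1
    have hyw : yw = y' := RFcode_snd_unique cc huw.1 hy'
    omega

theorem out_label_prune_correct {V : Type*} [Fintype V] [DecidableEq V]
    (step : V → V → Prop) (cc : ChainCover step) (k : ℕ) (hk : 1 ≤ k) (u v : V)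
    (h : (∃ xr yr, (xr, yr) ∈ topk k (RFcode step cc v) ∧
            (∀ y, (xr, y) ∉ topk k (RFcode step cc u)) ∧
            ∃ xs ys, (xs, ys) ∈ topk k (RFcode step cc u) ∧ xr < xs) ∨
         (∃ x yr yw, (x, yr) ∈ topk k (RFcode step cc v) ∧
            (x, yw) ∈ topk k (RFcode step cc u) ∧ yr < yw)) :
    ¬ Relation.ReflTransGen step u v :=
  out_label_prune_correct_general step cc k u v h
end

section
/- Let G be a directed graph on a finite vertex set with a chain cover ℂ (with injective rank function), let k ≥ 1, and for every vertex w set L_in(w) = top_k(RLcode(w)). Let u, v be vertices. If either (1) there exists (x_r, y_r) ∈ L_in(u) such that no code in L_in(v) has first component x_r, and there exists (x_s, y_s) ∈ L_in(v) with x_s > x_r; or (2) there exist (x, y_r) ∈ L_in(u) and (x, y_w) ∈ L_in(v) with the same first component x and y_w < y_r; then u cannot reach v (¬(u → v)). -/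
/-!
If `u → v`, every vertex that reaches `u` reaches `v`, so each code `(x, y)` of `RLcode u` is
dominated by a code `(x, y')` of `RLcode v` with `y ≤ y'`. Since `top_k` is closed under passing
to codes with smaller first component, in case (1) the code `(x_r, y')` would lie in `L_in(v)`
below `(x_s, y_s)`. In case (2), injectivity of the rank makes the first component of a code in
`RLcode v` determine the second, so `y_w = y' ≥ y_r`.
-/

section RLcode

variable {V : Type*} [DecidableEq V] {step : V → V → Prop} {cc : ChainCover step}

lemma RLcode_finite (v : V) : (RLcode step cc v).Finite := by
  refine (cc.chains.finite_toSet.biUnion fun C _ =>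
    C.finite_toSet.image fun w => (cc.rank C, C.idxOf w)).subset ?_
  rintro c ⟨C, hC, w, hw, -, -, rfl⟩
  exact Set.mem_biUnion hC ⟨w, hw, rfl⟩

lemma RLcode_snd_eq_of_fst_eq {v : V} {x y₁ y₂ : ℕ}
    (h₁ : (x, y₁) ∈ RLcode step cc v) (h₂ : (x, y₂) ∈ RLcode step cc v) : y₁ = y₂ := by
  obtain ⟨C₁, hC₁, w₁, hw₁, hr₁, hmax₁, he₁⟩ := h₁
  obtain ⟨C₂, hC₂, w₂, hw₂, hr₂, hmax₂, he₂⟩ := h₂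
  simp only [Prod.mk.injEq] at he₁ he₂
  obtain rfl : C₁ = C₂ := cc.rank_inj _ hC₁ _ hC₂ (he₁.1.symm.trans he₂.1)
  rw [he₁.2, he₂.2]
  exact le_antisymm (hmax₂ _ hw₁ hr₁) (hmax₁ _ hw₂ hr₂)

lemma RLcode_exists_snd_le_of_reflTransGen {u v : V} (huv : Relation.ReflTransGen step u v)
    {x y : ℕ} (h : (x, y) ∈ RLcode step cc u) :
    ∃ y', y ≤ y' ∧ (x, y') ∈ RLcode step cc v := by
  obtain ⟨C, hC, w, hw, hwu, -, he⟩ := h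
  simp only [Prod.mk.injEq] at he
  obtain ⟨rfl, rfl⟩ := he
  obtain ⟨m, ⟨hmC, hmv⟩, hmax⟩ := Set.exists_max_image
    {w' | w' ∈ C ∧ Relation.ReflTransGen step w' v} C.idxOf
    (C.finite_toSet.subset fun _ h => h.1) ⟨w, hw, hwu.trans huv⟩
  exact ⟨C.idxOf m, hmax w ⟨hw, hwu.trans huv⟩,
    C, hC, m, hmC, hmv, fun w' hw' hw'v => hmax w' ⟨hw', hw'v⟩, rfl⟩

end RLcode

lemma mem_topk_of_fst_lt {k : ℕ} {S : Set (ℕ × ℕ)} (hS : S.Finite) {c d : ℕ × ℕ}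
    (hc : c ∈ S) (hd : d ∈ topk k S) (hcd : c.1 < d.1) : c ∈ topk k S := by
  refine ⟨hc, lt_of_lt_of_le (Set.ncard_lt_ncard ?_ (hS.subset (Set.sep_subset _ _))) hd.2.le⟩
  have hsub : {c' ∈ S | c'.1 < c.1} ⊆ {c' ∈ S | c'.1 < d.1} := fun c' h => ⟨h.1, h.2.trans hcd⟩
  exact (Set.ssubset_iff_of_subset hsub).2 ⟨c, ⟨hc, hcd⟩, fun h => lt_irrefl _ h.2⟩

theorem in_label_prune_correct_general {V : Type*} [DecidableEq V]
    (step : V → V → Prop) (cc : ChainCover step) (k : ℕ) (u v : V)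
    (h : (∃ xr yr, (xr, yr) ∈ topk k (RLcode step cc u) ∧
            (∀ y, (xr, y) ∉ topk k (RLcode step cc v)) ∧
            ∃ xs ys, (xs, ys) ∈ topk k (RLcode step cc v) ∧ xr < xs) ∨
         (∃ x yr yw, (x, yr) ∈ topk k (RLcode step cc u) ∧
            (x, yw) ∈ topk k (RLcode step cc v) ∧ yw < yr)) :
    ¬ Relation.ReflTransGen step u v := by
  intro huv
  rcases h with ⟨xr, yr, hu, hv_miss, xs, ys, hs, hlt⟩ | ⟨x, yr, yw, hu, hv, hlt⟩
  · obtain ⟨y', -, hv⟩ := RLcode_exists_snd_le_of_reflTransGen huv hu.1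
    exact hv_miss y' (mem_topk_of_fst_lt (RLcode_finite v) hv hs hlt)
  · obtain ⟨y', hle, hv'⟩ := RLcode_exists_snd_le_of_reflTransGen huv hu.1
    have := RLcode_snd_eq_of_fst_eq hv.1 hv'
    omega

theorem in_label_prune_correct {V : Type*} [Fintype V] [DecidableEq V]
    (step : V → V → Prop) (cc : ChainCover step) (k : ℕ) (hk : 1 ≤ k) (u v : V)
    (h : (∃ xr yr, (xr, yr) ∈ topk k (RLcode step cc u) ∧
            (∀ y, (xr, y) ∉ topk k (RLcode step cc v)) ∧
            ∃ xs ys, (xs, ys) ∈ topk k (RLcode step cc v) ∧ xr < xs) ∨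
         (∃ x yr yw, (x, yr) ∈ topk k (RLcode step cc u) ∧
            (x, yw) ∈ topk k (RLcode step cc v) ∧ yw < yr)) :
    ¬ Relation.ReflTransGen step u v :=
  in_label_prune_correct_general step cc k u v h
end

section
/- Let G be a directed graph on a finite vertex set with a chain cover ℂ (with injective rank function), let k ≥ 1, and for each vertex v define RF_k(v) = {w ∈ RF(v) : code(w) ∈ top_k(RFcode(v))}. If u ∈ RF_k(v), and z is any vertex with v → z and z → u, then u ∈ RF_k(z). -/
/-- `u ∈ RF_k(v)`: `u` is a first reachable vertex of some chain for `v`,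
and its chain code belongs to `top_k(RFcode(v))`. -/
def InRFk {V : Type*} [DecidableEq V] (step : V → V → Prop) (cc : ChainCover step)
    (k : ℕ) (v u : V) : Prop :=
  ∃ C ∈ cc.chains, u ∈ C ∧ Relation.ReflTransGen step v u ∧
    (∀ w' ∈ C, Relation.ReflTransGen step v w' → C.idxOf u ≤ C.idxOf w') ∧
    (cc.rank C, C.idxOf u) ∈ topk k (RFcode step cc v)

/-!
Everything reachable from `z` is reachable from `v`. Hence `u` is still the first vertex of its
chain reachable from `z`, and the chains of smaller rank that `z` reaches are among those that `v`
reaches. A code in `RFcode` is determined by its rank, so `u`'s code is preceded in `RFcode z` by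
no more codes than in `RFcode v`, and stays in the top `k`.
-/

lemma mem_topk_of_fst_image_subset {k : ℕ} {S T : Set (ℕ × ℕ)} {c : ℕ × ℕ}
    (hS : S.Finite) (hT : Set.InjOn Prod.fst T) (hTS : Prod.fst '' T ⊆ Prod.fst '' S)
    (hcS : c ∈ topk k S) (hcT : c ∈ T) : c ∈ topk k T := by
  refine ⟨hcT, ?_⟩
  set T' := {c' ∈ T | c'.1 < c.1}
  set S' := {c' ∈ S | c'.1 < c.1}
  have himage : Prod.fst '' T' ⊆ Prod.fst '' S' := by
    rintro _ ⟨c', ⟨hc'T, hlt⟩, rfl⟩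
    obtain ⟨c'', hc''S, heq⟩ := hTS ⟨c', hc'T, rfl⟩
    exact ⟨c'', ⟨hc''S, heq ▸ hlt⟩, heq⟩
  have hS' : S'.Finite := hS.subset (Set.sep_subset _ _)
  calc T'.ncard = (Prod.fst '' T').ncard :=
        ((hT.mono (Set.sep_subset _ _)).ncard_image).symm
    _ ≤ (Prod.fst '' S').ncard := Set.ncard_le_ncard himage (hS'.image _)
    _ ≤ S'.ncard := Set.ncard_image_le hS'
    _ < k := hcS.2

namespace ChainCover

variable {V : Type*} [DecidableEq V] {step : V → V → Prop} (cc : ChainCover step)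

lemma RFcode_finite (v : V) : (RFcode step cc v).Finite := by
  refine (cc.chains.finite_toSet.biUnion fun C _ =>
    (C.toFinset.finite_toSet.image fun w => (cc.rank C, C.idxOf w))).subset ?_
  rintro _ ⟨C, hC, w, hw, -, -, rfl⟩
  simp only [Set.mem_iUnion, Set.mem_image, Finset.mem_coe, List.mem_toFinset]
  exact ⟨C, hC, w, hw, rfl⟩

lemma injOn_fst_RFcode (v : V) : Set.InjOn Prod.fst (RFcode step cc v) := by
  rintro _ ⟨C₁, hC₁, w₁, hw₁, hvw₁, hmin₁, rfl⟩ _ ⟨C₂, hC₂, w₂, hw₂, hvw₂, hmin₂, rfl⟩ hrank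
  obtain rfl := cc.rank_inj C₁ hC₁ C₂ hC₂ hrank
  rw [le_antisymm (hmin₁ w₂ hw₂ hvw₂) (hmin₂ w₁ hw₁ hvw₁)]

lemma rank_mem_fst_image_RFcode {v w : V} {C : List V} (hC : C ∈ cc.chains) (hw : w ∈ C)
    (hvw : Relation.ReflTransGen step v w) : cc.rank C ∈ Prod.fst '' RFcode step cc v := by
  have hreach : {x | x ∈ C ∧ Relation.ReflTransGen step v x}.Finite :=
    C.toFinset.finite_toSet.subset fun x hx => List.mem_toFinset.mpr hx.1
  obtain ⟨w₀, ⟨hw₀, hvw₀⟩, hmin⟩ := Set.exists_min_image _ C.idxOf hreach ⟨w, hw, hvw⟩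
  exact ⟨_, ⟨C, hC, w₀, hw₀, hvw₀, fun x hx hvx => hmin x ⟨hx, hvx⟩, rfl⟩, rfl⟩

lemma fst_image_RFcode_subset {v z : V} (hvz : Relation.ReflTransGen step v z) :
    Prod.fst '' RFcode step cc z ⊆ Prod.fst '' RFcode step cc v := by
  rintro _ ⟨_, ⟨C, hC, w, hw, hzw, -, rfl⟩, rfl⟩
  exact cc.rank_mem_fst_image_RFcode hC hw (hvz.trans hzw)

end ChainCover

theorem RFk_persists_along_path_general {V : Type*} [DecidableEq V]
    (step : V → V → Prop) (cc : ChainCover step) (k : ℕ)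
    (u v z : V) (hu : InRFk step cc k v u)
    (hvz : Relation.ReflTransGen step v z) (hzu : Relation.ReflTransGen step z u) :
    InRFk step cc k z u := by
  obtain ⟨C, hC, huC, -, hmin, htop⟩ := hu
  have hminz : ∀ w ∈ C, Relation.ReflTransGen step z w → C.idxOf u ≤ C.idxOf w :=
    fun w hw hzw => hmin w hw (hvz.trans hzw)
  refine ⟨C, hC, huC, hzu, hminz, ?_⟩
  exact mem_topk_of_fst_image_subset (cc.RFcode_finite v) (cc.injOn_fst_RFcode z)
    (cc.fst_image_RFcode_subset hvz) htop ⟨C, hC, u, huC, hzu, hminz, rfl⟩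

theorem RFk_persists_along_path {V : Type*} [Fintype V] [DecidableEq V]
    (step : V → V → Prop) (cc : ChainCover step) (k : ℕ) (hk : 1 ≤ k)
    (u v z : V) (hu : InRFk step cc k v u)
    (hvz : Relation.ReflTransGen step v z) (hzu : Relation.ReflTransGen step z u) :
    InRFk step cc k z u :=
  RFk_persists_along_path_general step cc k u v z hu hvz hzu
end

section
/- Let G be the transformed graph of a temporal graph in which every temporal edge has traversal time λ ≥ 1, and let G_new be the graph obtained from G by adding, for every v ∈ 𝒱, all edges out(v, t) → in(v, t') with t ∈ T_out(v), t' ∈ T_in(v), and t < t'. Then for any two distinct original vertices a ≠ b in 𝒱, any copy r of a, and any copy s of b: r →_G s if and only if r →_{G_new} s. -/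
/-- The edge relation of `G_new`: all edges of `G` together with, for every
original vertex `v`, the edges `out(v, t) → in(v, t')` for `t ∈ T_out(v)`,
`t' ∈ T_in(v)` and `t < t'`. -/
def GEdgeNew {V : Type*} (E : Finset (V × V × ℕ × ℕ)) (x y : Copy V) : Prop :=
  GEdge E x y ∨
    ∃ v t t', t ∈ Tout E v ∧ t' ∈ Tin E v ∧ t < t' ∧ x = Copy.out v t ∧ y = Copy.inn v t'

open Relation

theorem reflTransGen_of_consecutive {α : Type*} {R : α → α → Prop} (T : Set ℕ) (f : ℕ → α)
    (hR : ∀ t ∈ T, ∀ t' ∈ T, t < t' → (∀ s ∈ T, s ≤ t ∨ t' ≤ s) → R (f t) (f t'))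
    {μ τ : ℕ} (hμ : μ ∈ T) (hτ : τ ∈ T) (hle : μ ≤ τ) :
    ReflTransGen R (f μ) (f τ) := by
  induction hd : τ - μ using Nat.strong_induction_on generalizing μ with
  | _ d ih =>
    rcases hle.eq_or_lt with rfl | hlt
    · exact .refl
    have hne : {s | s ∈ T ∧ μ < s}.Nonempty := ⟨τ, hτ, hlt⟩
    obtain ⟨hnextT, hμnext⟩ := Nat.sInf_mem hne
    have hnext_le : sInf {s | s ∈ T ∧ μ < s} ≤ τ := Nat.sInf_le ⟨hτ, hlt⟩
    have hstep : R (f μ) (f (sInf {s | s ∈ T ∧ μ < s})) :=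
      hR μ hμ _ hnextT hμnext fun s hs =>
        (le_or_gt s μ).imp id fun hμs => Nat.sInf_le ⟨hs, hμs⟩
    exact .head hstep (ih _ (by omega) hnextT hnext_le rfl)

namespace GEdge

variable {V : Type*} {E : Finset (V × V × ℕ × ℕ)}

theorem reflTransGen_inn_s9 {v : V} {μ τ : ℕ} (hμ : μ ∈ Tin E v) (hτ : τ ∈ Tin E v)
    (hle : μ ≤ τ) : ReflTransGen (GEdge E) (.inn v μ) (.inn v τ) :=
  reflTransGen_of_consecutive (Tin E v) (Copy.inn v)
    (fun _ ht _ ht' hlt hcons => in_in ht ht' hlt hcons) hμ hτ hle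

theorem reflTransGen_out_s9 {v : V} {μ τ : ℕ} (hμ : μ ∈ Tout E v) (hτ : τ ∈ Tout E v)
    (hle : μ ≤ τ) : ReflTransGen (GEdge E) (.out v μ) (.out v τ) :=
  reflTransGen_of_consecutive (Tout E v) (Copy.out v)
    (fun _ ht _ ht' hlt hcons => out_out ht ht' hlt hcons) hμ hτ hle

/-- Into `out(v, t)` lead only `out(v, t')` with `t' < t` and `in(v, μ)` with `μ ≤ t`. -/
theorem exists_inn_of_reflTransGen_out {x : Copy V} {v : V} {t : ℕ}
    (h : ReflTransGen (GEdge E) x (.out v t)) (hx : x.base ≠ v) :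
    ∃ μ ∈ Tin E v, μ ≤ t ∧ ReflTransGen (GEdge E) x (.inn v μ) := by
  generalize hz : Copy.out v t = z at h
  induction h generalizing t with
  | refl => subst hz; exact absurd rfl hx
  | tail hxw hwz ih =>
    subst hz
    cases hwz with
    | out_out _ _ hlt _ =>
      obtain ⟨μ, hμ, hμt, hxμ⟩ := ih rfl
      exact ⟨μ, hμ, by omega, hxμ⟩
    | in_out hμ _ hμt _ _ => exact ⟨_, hμ, hμt, hxw⟩

end GEdge

section

variable {V : Type*} {E : Finset (V × V × ℕ × ℕ)}

theorem reflTransGen_gEdge_or_of_gEdgeNew {x y : Copy V}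
    (h : ReflTransGen (GEdgeNew E) x y) :
    ReflTransGen (GEdge E) x y ∨
      ∃ v t τ, ReflTransGen (GEdge E) x (.out v t) ∧ t ∈ Tout E v ∧ τ ∈ Tin E v ∧ t < τ ∧
        y = .inn v τ := by
  induction h with
  | refl => exact .inl .refl
  | tail _ hyz ih =>
    rcases ih with hxy | ⟨v, t, τ, hxt, ht, hτ, htτ, rfl⟩
    · rcases hyz with hyz | ⟨v, t, τ, ht, hτ, htτ, rfl, rfl⟩
      · exact .inl (hxy.tail hyz)
      · exact .inr ⟨v, t, τ, hxy, ht, hτ, htτ, rfl⟩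
    · rcases hyz with hyz | ⟨_, _, _, _, _, _, hsrc, _⟩
      · cases hyz with
        | in_in _ hτ' hlt _ => exact .inr ⟨v, t, _, hxt, ht, hτ', by omega, rfl⟩
        | in_out _ hs hτs _ _ => exact .inl (hxt.trans (GEdge.reflTransGen_out_s9 ht hs (by omega)))
      · cases hsrc

theorem reflTransGen_gEdge_of_gEdgeNew {x y : Copy V} (h : ReflTransGen (GEdgeNew E) x y)
    (hxy : x.base ≠ y.base) : ReflTransGen (GEdge E) x y := by
  rcases reflTransGen_gEdge_or_of_gEdgeNew h with hG | ⟨v, t, τ, hxt, -, hτ, htτ, rfl⟩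
  · exact hG
  obtain ⟨μ, hμ, hμt, hxμ⟩ := GEdge.exists_inn_of_reflTransGen_out hxt hxy
  exact hxμ.trans (GEdge.reflTransGen_inn_s9 hμ hτ (by omega))

end

theorem reach_in_G_iff_reach_in_Gnew_general {V : Type*} (E : Finset (V × V × ℕ × ℕ))
    (a b : V) (hab : a ≠ b) (r s : Copy V)
    (hra : r.base = a) (hsb : s.base = b) :
    Relation.ReflTransGen (GEdge E) r s ↔ Relation.ReflTransGen (GEdgeNew E) r s :=
  ⟨ReflTransGen.mono (fun _ _ => Or.inl) r s,
    fun h => reflTransGen_gEdge_of_gEdgeNew h (hra ▸ hsb ▸ hab)⟩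

theorem reach_in_G_iff_reach_in_Gnew {V : Type*} (E : Finset (V × V × ℕ × ℕ))
    (hl : ∀ u v t l, (u, v, t, l) ∈ E → 1 ≤ l)
    (a b : V) (hab : a ≠ b) (r s : Copy V)
    (hr : IsVert E r) (hs : IsVert E s) (hra : r.base = a) (hsb : s.base = b) :
    Relation.ReflTransGen (GEdge E) r s ↔ Relation.ReflTransGen (GEdgeNew E) r s :=
  reach_in_G_iff_reach_in_Gnew_general E a b hab r s hra hsb
end

section
/- Let G be the transformed graph of a temporal graph, let a, b ∈ 𝒱, and let t_α ≤ t_ω be natural numbers. Then P(a, b, [t_α, t_ω]) ≠ ∅ if and only if the sets {t ∈ T_out(a) : t ≥ t_α} and {t' ∈ T_in(b) : t' ≤ t_ω} are both nonempty and, letting t_o = min{t ∈ T_out(a) : t ≥ t_α} and t_i = max{t' ∈ T_in(b) : t' ≤ t_ω}, we have out(a, t_o) →_G in(b, t_i). -/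
/-- Consecutive-edge condition for a temporal path: the head vertex of the next
edge is the tail vertex of the current one, and `t_i + λ_i ≤ t_{i+1}`. -/
def StepOK {V : Type*} (e f : V × V × ℕ × ℕ) : Prop :=
  e.2.1 = f.1 ∧ e.2.2.1 + e.2.2.2 ≤ f.2.2.1

/-- `P` is a temporal path from `a` t0 `b` in the temporal graph with
temporal edge set `E`. -/
def IsTempPath {V : Type*} (E : Finset (V × V × ℕ × ℕ)) (a b : V)
    (P : List (V × V × ℕ × ℕ)) : Prop :=
  P ≠ [] ∧ (∀ e ∈ P, e ∈ E) ∧ List.Chain' StepOK P ∧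
    (P.head?.map fun e => e.1) = some a ∧ (P.getLast?.map fun e => e.2.1) = some b

/-- The starting time `start(P)` of a (nonempty) temporal path. -/
def startT {V : Type*} (P : List (V × V × ℕ × ℕ)) : ℕ :=
  (P.head?.map fun e => e.2.2.1).getD 0

/-- The ending time `end(P)` of a (nonempty) temporal path. -/
def endT {V : Type*} (P : List (V × V × ℕ × ℕ)) : ℕ :=
  (P.getLast?.map fun e => e.2.2.1 + e.2.2.2).getD 0

/-- The duration `dura(P) = end(P) - start(P)` of a temporal path. -/
def duraT {V : Type*} (P : List (V × V × ℕ × ℕ)) : ℕ := endT P - startT P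


/-!
A temporal path `e₁, …, e_p` traces a walk in `G`: each `e_i` is a cross edge
`out(v_i, t_i) → in(v_{i+1}, t_i + λ_i)`, and the waiting time at `v_{i+1}` is bridged by
climbing the in-chain, taking the in–out edge and climbing the out-chain up to
`out(v_{i+1}, t_{i+1})`. Conversely, every edge of `G` either keeps the base vertex without
decreasing the time, or is a temporal edge, so the cross edges of a walk form a temporal path;
along the walk the time stamps only grow, which yields the bounds on `start` and `end`.
-/

open Relation

section Extremal

variable {S : Set ℕ}

theorem Nat.exists_least_mem_ge {a s : ℕ} (hs : s ∈ S) (has : a ≤ s) :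
    ∃ t ∈ S, a ≤ t ∧ ∀ u ∈ S, a ≤ u → t ≤ u := by
  classical
  have hex : ∃ t, t ∈ S ∧ a ≤ t := ⟨s, hs, has⟩
  exact ⟨Nat.find hex, (Nat.find_spec hex).1, (Nat.find_spec hex).2,
    fun u hu hau => Nat.find_min' hex ⟨hu, hau⟩⟩

theorem Nat.exists_greatest_mem_le {b s : ℕ} (hs : s ∈ S) (hsb : s ≤ b) :
    ∃ t ∈ S, t ≤ b ∧ ∀ u ∈ S, u ≤ b → u ≤ t := by
  classical
  exact ⟨Nat.findGreatest (· ∈ S) b, Nat.findGreatest_spec hsb hs, Nat.findGreatest_le b,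
    fun u hu hub => Nat.le_findGreatest hub hu⟩

theorem reflTransGen_of_consecutive_mem {α : Type*} {r : α → α → Prop} {f : ℕ → α}
    (hr : ∀ t ∈ S, ∀ t' ∈ S, t < t' → (∀ s ∈ S, s ≤ t ∨ t' ≤ s) → r (f t) (f t'))
    {t t' : ℕ} (ht : t ∈ S) (ht' : t' ∈ S) (hle : t ≤ t') : ReflTransGen r (f t) (f t') := by
  induction t' using Nat.strong_induction_on with
  | _ t' ih =>
    rcases hle.eq_or_lt with rfl | hlt
    · exact .refl
    obtain ⟨s, hs, hst', hmax⟩ := Nat.exists_greatest_mem_le (b := t' - 1) ht (by omega)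
    have hconsec : ∀ u ∈ S, u ≤ s ∨ t' ≤ u := fun u hu => by
      by_cases hu' : u ≤ t' - 1
      · exact .inl (hmax u hu hu')
      · exact .inr (by omega)
    exact (ih s (by omega) hs (hmax t ht (by omega))).tail
      (hr s hs t' ht' (by omega) hconsec)

end Extremal

section TemporalGraph

variable {V : Type*} {E : Finset (V × V × ℕ × ℕ)}

section TransformedGraph

theorem reflTransGen_inn_inn {v : V} {t t' : ℕ} (ht : t ∈ Tin E v) (ht' : t' ∈ Tin E v)
    (hle : t ≤ t') : ReflTransGen (GEdge E) (.inn v t) (.inn v t') :=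
  reflTransGen_of_consecutive_mem (f := Copy.inn v)
    (fun _ hs _ hs' hlt hcons => .in_in hs hs' hlt hcons) ht ht' hle

theorem reflTransGen_out_out {v : V} {t t' : ℕ} (ht : t ∈ Tout E v) (ht' : t' ∈ Tout E v)
    (hle : t ≤ t') : ReflTransGen (GEdge E) (.out v t) (.out v t') :=
  reflTransGen_of_consecutive_mem (f := Copy.out v)
    (fun _ hs _ hs' hlt hcons => .out_out hs hs' hlt hcons) ht ht' hle

/-- The in–out edge leaves from the latest arrival `t'` not after `s` and lands on the earliest
departure `s'` not before `t'`; then `t ≤ t'` and `s' ≤ s`. -/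
theorem reflTransGen_inn_out {v : V} {t s : ℕ} (ht : t ∈ Tin E v) (hs : s ∈ Tout E v)
    (hts : t ≤ s) : ReflTransGen (GEdge E) (.inn v t) (.out v s) := by
  obtain ⟨t', ht', ht's, hmax⟩ := Nat.exists_greatest_mem_le ht hts
  obtain ⟨s', hs', ht's', hmin⟩ := Nat.exists_least_mem_ge hs ht's
  have hedge : GEdge E (.inn v t') (.out v s') :=
    .in_out ht' hs' ht's' hmin fun u hu hus' => hmax u hu (hus'.trans (hmin s hs ht's))
  exact (reflTransGen_inn_inn ht ht' (hmax t ht hts)).trans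
    (.head hedge (reflTransGen_out_out hs' hs (hmin s hs ht's)))

end TransformedGraph

section TemporalPath

variable {a b : V} {e f : V × V × ℕ × ℕ} {P : List (V × V × ℕ × ℕ)}

theorem isTempPath_singleton_iff : IsTempPath E a b [e] ↔ e ∈ E ∧ e.1 = a ∧ e.2.1 = b := by
  simp only [IsTempPath, List.mem_singleton, forall_eq, List.head?_cons, List.getLast?_singleton,
    Option.map_some, Option.some.injEq, ne_eq, List.cons_ne_nil, not_false_eq_true, true_and]
  exact ⟨fun ⟨he, _, ha, hb⟩ => ⟨he, ha, hb⟩,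
    fun ⟨he, ha, hb⟩ => ⟨he, List.IsChain.singleton e, ha, hb⟩⟩

theorem isTempPath_cons_cons_iff : IsTempPath E a b (e :: f :: P) ↔
    e ∈ E ∧ e.1 = a ∧ StepOK e f ∧ IsTempPath E f.1 b (f :: P) := by
  constructor
  · rintro ⟨-, hmem, hchain, hhead, hlast⟩
    obtain ⟨hstep, hchain⟩ := List.isChain_cons_cons.mp hchain
    exact ⟨hmem _ List.mem_cons_self, by simpa using hhead, hstep, List.cons_ne_nil _ _,
      fun x hx => hmem x (List.mem_cons_of_mem _ hx), hchain, rfl,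
      by rwa [List.getLast?_cons_cons] at hlast⟩
  · rintro ⟨he, rfl, hstep, -, hmem, hchain, -, hlast⟩
    exact ⟨List.cons_ne_nil _ _, List.forall_mem_cons.mpr ⟨he, hmem⟩,
      List.isChain_cons_cons.mpr ⟨hstep, hchain⟩, rfl, by rwa [List.getLast?_cons_cons]⟩

theorem endT_cons_cons : endT (e :: f :: P) = endT (f :: P) := by
  simp [endT]

theorem IsTempPath.startT_mem_Tout (hP : IsTempPath E a b P) : startT P ∈ Tout E a := by
  obtain ⟨hne, hmem, -, hhead, -⟩ := hP
  obtain ⟨⟨u, v, t, l⟩, P, rfl⟩ := List.exists_cons_of_ne_nil hne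
  obtain rfl : u = a := by simpa using hhead
  exact ⟨v, l, hmem _ List.mem_cons_self⟩

theorem IsTempPath.endT_mem_Tin (hP : IsTempPath E a b P) : endT P ∈ Tin E b := by
  obtain ⟨hne, hmem, -, -, hlast⟩ := hP
  obtain ⟨⟨u, v, t, l⟩, hlast'⟩ := Option.isSome_iff_exists.mp (List.getLast?_isSome.mpr hne)
  obtain rfl : v = b := by simpa [hlast'] using hlast
  exact ⟨u, t, l, hmem _ (List.mem_of_getLast? hlast'), by simp [endT, hlast']⟩

theorem IsTempPath.reflTransGen (hP : IsTempPath E a b P) :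
    ReflTransGen (GEdge E) (.out a (startT P)) (.inn b (endT P)) := by
  induction P generalizing a with
  | nil => exact absurd rfl hP.1
  | cons e P ih =>
    obtain ⟨u, v, t, l⟩ := e
    cases P with
    | nil =>
      obtain ⟨he, rfl, rfl⟩ := isTempPath_singleton_iff.mp hP
      exact .single (.cross he)
    | cons f P =>
      obtain ⟨he, rfl, ⟨rfl, hgap⟩, hP'⟩ := isTempPath_cons_cons_iff.mp hP
      have hwait : ReflTransGen (GEdge E) (.inn f.1 (t + l)) (.out f.1 (startT (f :: P))) :=
        reflTransGen_inn_out ⟨u, t, l, he, rfl⟩ hP'.startT_mem_Tout hgap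
      rw [endT_cons_cons]
      exact .head (.cross he) (hwait.trans (ih hP'))

end TemporalPath

section Reachability

def TempReachable (E : Finset (V × V × ℕ × ℕ)) (a b : V) (ta tw : ℕ) : Prop :=
  ∃ P, IsTempPath E a b P ∧ ta ≤ startT P ∧ endT P ≤ tw

theorem TempReachable.mono {a b : V} {ta ta' tw tw' : ℕ} (h : TempReachable E a b ta tw)
    (hta : ta' ≤ ta) (htw : tw ≤ tw') : TempReachable E a b ta' tw' :=
  let ⟨P, hP, hstart, hend⟩ := h
  ⟨P, hP, hta.trans hstart, hend.trans htw⟩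

theorem TempReachable.cons {u v b : V} {t l tw : ℕ} (he : (u, v, t, l) ∈ E)
    (h : (v = b ∧ t + l ≤ tw) ∨ TempReachable E v b (t + l) tw) : TempReachable E u b t tw := by
  rcases h with ⟨rfl, hend⟩ | ⟨_ | ⟨f, P⟩, hP, hstart, hend⟩
  · exact ⟨[(u, v, t, l)], isTempPath_singleton_iff.mpr ⟨he, rfl, rfl⟩, le_rfl, hend⟩
  · exact absurd rfl hP.1
  · have hfv : f.1 = v := by simpa using hP.2.2.2.1
    refine ⟨(u, v, t, l) :: f :: P,
      isTempPath_cons_cons_iff.mpr ⟨he, rfl, ⟨hfv.symm, hstart⟩, hfv ▸ hP⟩,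
      le_rfl, ?_⟩
    rwa [endT_cons_cons]

/-- An in-copy of `b` has arrived already, while an out-copy must still leave along a temporal
edge. -/
def ArrivesBy (E : Finset (V × V × ℕ × ℕ)) (b : V) (tw : ℕ) : Copy V → Prop
  | .out u s => TempReachable E u b s tw
  | .inn u t => (u = b ∧ t ≤ tw) ∨ TempReachable E u b t tw

theorem arrivesBy_of_reflTransGen {b : V} {tw : ℕ} {x : Copy V}
    (h : ReflTransGen (GEdge E) x (.inn b tw)) : ArrivesBy E b tw x := by
  induction h using ReflTransGen.head_induction_on with
  | refl => exact .inl ⟨rfl, le_rfl⟩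
  | head hedge _ ih =>
    cases hedge with
    | in_in _ _ hlt _ =>
      rcases ih with ⟨rfl, hle⟩ | h
      · exact .inl ⟨rfl, hlt.le.trans hle⟩
      · exact .inr (h.mono hlt.le le_rfl)
    | out_out _ _ hlt _ => exact ih.mono hlt.le le_rfl
    | in_out _ _ hle _ _ => exact .inr (ih.mono hle le_rfl)
    | cross he => exact .cons he ih

end Reachability

end TemporalGraph

theorem temporal_reachability_iff_general {V : Type*} (E : Finset (V × V × ℕ × ℕ))
    (a b : V) (ta tw : ℕ) :
    (∃ P, IsTempPath E a b P ∧ ta ≤ startT P ∧ endT P ≤ tw) ↔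
      ∃ t0 t1,
        (t0 ∈ Tout E a ∧ ta ≤ t0 ∧ ∀ t ∈ Tout E a, ta ≤ t → t0 ≤ t) ∧
        (t1 ∈ Tin E b ∧ t1 ≤ tw ∧ ∀ t' ∈ Tin E b, t' ≤ tw → t' ≤ t1) ∧
        Relation.ReflTransGen (GEdge E) (.out a t0) (.inn b t1) := by
  constructor
  · rintro ⟨P, hP, hstart, hend⟩
    have hs := hP.startT_mem_Tout
    have he := hP.endT_mem_Tin
    obtain ⟨t0, ht0, hta, hmin⟩ := Nat.exists_least_mem_ge hs hstart
    obtain ⟨t1, ht1, htw, hmax⟩ := Nat.exists_greatest_mem_le he hend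
    refine ⟨t0, t1, ⟨ht0, hta, hmin⟩, ⟨ht1, htw, hmax⟩, ?_⟩
    exact (reflTransGen_out_out ht0 hs (hmin _ hs hstart)).trans
      (hP.reflTransGen.trans (reflTransGen_inn_inn he ht1 (hmax _ he hend)))
  · rintro ⟨t0, t1, ⟨-, hta, -⟩, ⟨-, htw, -⟩, hwalk⟩
    exact (arrivesBy_of_reflTransGen hwalk).mono hta htw

theorem temporal_reachability_iff {V : Type*} (E : Finset (V × V × ℕ × ℕ))
    (a b : V) (ta tw : ℕ) (htatw : ta ≤ tw) :
    (∃ P, IsTempPath E a b P ∧ ta ≤ startT P ∧ endT P ≤ tw) ↔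
      ∃ t0 t1,
        (t0 ∈ Tout E a ∧ ta ≤ t0 ∧ ∀ t ∈ Tout E a, ta ≤ t → t0 ≤ t) ∧
        (t1 ∈ Tin E b ∧ t1 ≤ tw ∧ ∀ t' ∈ Tin E b, t' ≤ tw → t' ≤ t1) ∧
        Relation.ReflTransGen (GEdge E) (.out a t0) (.inn b t1) :=
  temporal_reachability_iff_general E a b ta tw
end

section
/- Let G = (V, E) be the transformed graph of a temporal graph with temporal edge set 𝒠. Then the number of vertices of G satisfies |V| ≤ 2·|𝒠| and the number of edges of G satisfies |E| ≤ 4·|𝒠|. -/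
/-! Every vertex of the transformed graph is `in(v, t + l)` or `out(u, t)` for a temporal edge
`(u, v, t, l)`, so there are at most `2|𝒠|` of them. Edges are charged injectively: an edge
leaving an in-copy to its head (a copy has at most one in-copy predecessor, by the choice of
consecutive times), an out-out edge to its tail, and a cross edge to the temporal edge inducing
it. The charges lie in vertices ⊔ out-copies ⊔ `𝒠`, which has at most `2|𝒠| + |𝒠| + |𝒠|`
elements. -/

namespace Copy

open Classical

variable {V : Type*} (E : Finset (V × V × ℕ × ℕ))

noncomputable def inCopies : Finset (Copy V) := E.image fun e => .inn e.2.1 (e.2.2.1 + e.2.2.2)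

noncomputable def outCopies : Finset (Copy V) := E.image fun e => .out e.1 e.2.2.1

noncomputable def vertices : Finset (Copy V) := inCopies E ∪ outCopies E

theorem card_inCopies_le : (inCopies E).card ≤ E.card := Finset.card_image_le

theorem card_outCopies_le : (outCopies E).card ≤ E.card := Finset.card_image_le

theorem card_vertices_le : (vertices E).card ≤ 2 * E.card := by
  rw [two_mul]
  exact (Finset.card_union_le _ _).trans (add_le_add (card_inCopies_le E) (card_outCopies_le E))

variable {E}

theorem mem_inCopies_iff {x : Copy V} :
    x ∈ inCopies E ↔ ∃ v t, x = .inn v t ∧ t ∈ Tin E v := by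
  simp only [inCopies, Finset.mem_image, Tin, Set.mem_ofPred_eq, Prod.exists]
  constructor
  · rintro ⟨u, v, t, l, he, rfl⟩
    exact ⟨v, t + l, rfl, u, t, l, he, rfl⟩
  · rintro ⟨v, _, rfl, u, t, l, he, rfl⟩
    exact ⟨u, v, t, l, he, rfl⟩

theorem mem_outCopies_iff {x : Copy V} :
    x ∈ outCopies E ↔ ∃ v t, x = .out v t ∧ t ∈ Tout E v := by
  simp only [outCopies, Finset.mem_image, Tout, Set.mem_ofPred_eq, Prod.exists]
  constructor
  · rintro ⟨v, u, t, l, he, rfl⟩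
    exact ⟨v, t, rfl, u, l, he⟩
  · rintro ⟨v, t, rfl, u, l, he⟩
    exact ⟨v, u, t, l, he, rfl⟩

theorem out_mem_outCopies {v : V} {t : ℕ} (h : t ∈ Tout E v) : Copy.out v t ∈ outCopies E :=
  mem_outCopies_iff.2 ⟨v, t, rfl, h⟩

theorem mem_vertices_iff {x : Copy V} : x ∈ vertices E ↔ IsVert E x := by
  cases x <;> simp [vertices, mem_inCopies_iff, mem_outCopies_iff, IsVert]

theorem coe_vertices : (vertices E : Set (Copy V)) = {x | IsVert E x} :=
  Set.ext fun _ => mem_vertices_iff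

end Copy

open Copy

theorem ncard_setOf_isVert_le {V : Type*} (E : Finset (V × V × ℕ × ℕ)) :
    {x : Copy V | IsVert E x}.ncard ≤ 2 * E.card := by
  rw [← coe_vertices, Set.ncard_coe_finset]
  exact card_vertices_le E

namespace GEdge

variable {V : Type*} {E : Finset (V × V × ℕ × ℕ)}

theorem inn_tail_unique {y : Copy V} {v₁ v₂ : V} {t₁ t₂ : ℕ}
    (h₁ : GEdge E (.inn v₁ t₁) y) (h₂ : GEdge E (.inn v₂ t₂) y) :
    Copy.inn v₁ t₁ = .inn v₂ t₂ := by
  cases h₁ with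
  | in_in ht₁ _ _ hgap₁ =>
    cases h₂ with
    | in_in ht₂ _ _ hgap₂ =>
      have := hgap₁ _ ht₂
      have := hgap₂ _ ht₁
      congr 1
      omega
  | in_out ht₁ _ hle₁ _ hlast₁ =>
    cases h₂ with
    | in_out ht₂ _ hle₂ _ hlast₂ =>
      rw [le_antisymm (hlast₂ _ ht₁ hle₁) (hlast₁ _ ht₂ hle₂)]

theorem out_out_head_unique {u v₁ v₂ : V} {t s₁ s₂ : ℕ}
    (h₁ : GEdge E (.out u t) (.out v₁ s₁)) (h₂ : GEdge E (.out u t) (.out v₂ s₂)) :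
    Copy.out v₁ s₁ = .out v₂ s₂ := by
  cases h₁ with
  | out_out _ hs₁ _ hgap₁ =>
    cases h₂ with
    | out_out _ hs₂ _ hgap₂ =>
      have := hgap₁ _ hs₂
      have := hgap₂ _ hs₁
      congr 1
      omega

theorem time_le_of_out_inn {u v : V} {t s : ℕ} (h : GEdge E (.out u t) (.inn v s)) : t ≤ s := by
  cases h
  omega

end GEdge

/-- On a cross edge `t ≤ s`, so `s - t` recovers the traversal time. -/
def edgeCharge {V : Type*} : Copy V × Copy V → Copy V ⊕ Copy V ⊕ (V × V × ℕ × ℕ)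
  | (.inn _ _, y) => .inl y
  | (x, .out _ _) => .inr (.inl x)
  | (.out u t, .inn v s) => .inr (.inr (u, v, t, s - t))

section edgeCharge

variable {V : Type*} {E : Finset (V × V × ℕ × ℕ)}

theorem edgeCharge_mem_disjSum {p : Copy V × Copy V} (hp : GEdge E p.1 p.2) :
    edgeCharge p ∈ (vertices E).disjSum ((outCopies E).disjSum E) := by
  obtain ⟨x, y⟩ := p
  cases hp with
  | in_in _ ht' _ _ => simpa [edgeCharge] using (mem_vertices_iff (x := .inn _ _)).2 ht'
  | out_out ht _ _ _ => simpa [edgeCharge] using out_mem_outCopies ht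
  | in_out _ hs _ _ _ => simpa [edgeCharge] using (mem_vertices_iff (x := .out _ _)).2 hs
  | cross he => simpa [edgeCharge] using he

theorem edgeCharge_injOn : Set.InjOn edgeCharge {p : Copy V × Copy V | GEdge E p.1 p.2} := by
  rintro ⟨x, y⟩ hp ⟨x', y'⟩ hq h
  simp only [Set.mem_ofPred_eq] at hp hq
  rcases x with ⟨v, t⟩ | ⟨v, t⟩ <;> rcases x' with ⟨v', t'⟩ | ⟨v', t'⟩
  · obtain rfl : y = y' := Sum.inl_injective h
    rw [hp.inn_tail_unique hq]
  · cases y' <;> simp [edgeCharge] at h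
  · cases y <;> simp [edgeCharge] at h
  · rcases y with ⟨w, s⟩ | ⟨w, s⟩ <;> rcases y' with ⟨w', s'⟩ | ⟨w', s'⟩ <;>
      simp only [edgeCharge, reduceCtorEq, Sum.inr.injEq, Sum.inl.injEq, Copy.out.injEq,
        Prod.mk.injEq] at h
    · obtain ⟨rfl, rfl, rfl, hs⟩ := h
      have := hp.time_le_of_out_inn
      have := hq.time_le_of_out_inn
      obtain rfl : s = s' := by omega
      rfl
    · obtain ⟨rfl, rfl⟩ := h
      rw [hp.out_out_head_unique hq]

end edgeCharge

theorem ncard_setOf_gEdge_le {V : Type*} (E : Finset (V × V × ℕ × ℕ)) :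
    {p : Copy V × Copy V | GEdge E p.1 p.2}.ncard ≤ 4 * E.card := by
  calc {p : Copy V × Copy V | GEdge E p.1 p.2}.ncard
      ≤ ((vertices E).disjSum ((outCopies E).disjSum E) : Set _).ncard :=
        Set.ncard_le_ncard_of_injOn edgeCharge (fun _ hp => edgeCharge_mem_disjSum hp)
          edgeCharge_injOn
    _ = (vertices E).card + ((outCopies E).card + E.card) := by
        rw [Set.ncard_coe_finset, Finset.card_disjSum, Finset.card_disjSum]
    _ ≤ 2 * E.card + (E.card + E.card) := by
        gcongr
        exacts [card_vertices_le E, card_outCopies_le E]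
    _ = 4 * E.card := by ring

theorem transformed_graph_size {V : Type*} (E : Finset (V × V × ℕ × ℕ)) :
    {x : Copy V | IsVert E x}.ncard ≤ 2 * E.card ∧
    {p : Copy V × Copy V | GEdge E p.1 p.2}.ncard ≤ 4 * E.card :=
  ⟨ncard_setOf_isVert_le E, ncard_setOf_gEdge_le E⟩
end

section
/- Let G be the transformed graph of a temporal graph in which every temporal edge (u, v, t, λ) has u ≠ v (no self-loops). Then for any a ∈ 𝒱, any t ∈ T_out(a) and any t' ∈ T_in(a): out(a, t) →_G in(a, t') if and only if there exists a temporal edge (a, c, s, λ) ∈ 𝒠 with s ≥ t (so necessarily c ≠ a) such that in(c, s + λ) →_G in(a, t'). -/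
open Relation

theorem Nat.reflTransGen_of_consecutive_s16 {S : Set ℕ} {r : ℕ → ℕ → Prop}
    (hr : ∀ x ∈ S, ∀ y ∈ S, x < y → (∀ z ∈ S, z ≤ x ∨ y ≤ z) → r x y)
    {x y : ℕ} (hx : x ∈ S) (hy : y ∈ S) (hxy : x ≤ y) : ReflTransGen r x y := by
  induction y using Nat.strong_induction_on with
  | _ y ih =>
    rcases hxy.eq_or_lt with rfl | hlt
    · exact .refl
    -- step back to the predecessor `p` of `y` in `S`
    have hne : {z | z ∈ S ∧ z < y}.Nonempty := ⟨x, hx, hlt⟩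
    have hbdd : BddAbove {z | z ∈ S ∧ z < y} := ⟨y, fun z hz => hz.2.le⟩
    set p := sSup {z | z ∈ S ∧ z < y}
    obtain ⟨hp, hpy⟩ : p ∈ S ∧ p < y := Nat.sSup_mem hne hbdd
    have hle : ∀ z ∈ S, z < y → z ≤ p := fun z hz hzy => le_csSup hbdd ⟨hz, hzy⟩
    have hconsec : ∀ z ∈ S, z ≤ p ∨ y ≤ z := fun z hz =>
      (lt_or_ge z y).imp (hle z hz) id
    exact (ih p hpy hp (hle x hx hlt)).tail (hr p hp y hy hpy hconsec)

section

variable {V : Type*} {E : Finset (V × V × ℕ × ℕ)}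

theorem reflTransGen_out_of_le {a : V} {t s : ℕ} (ht : t ∈ Tout E a) (hs : s ∈ Tout E a)
    (hts : t ≤ s) : ReflTransGen (GEdge E) (.out a t) (.out a s) :=
  (Nat.reflTransGen_of_consecutive_s16 (r := fun x y => GEdge E (.out a x) (.out a y))
    (fun _ hx _ hy hxy hconsec => .out_out hx hy hxy hconsec) ht hs hts).lift _ fun _ _ h => h

/-- A path leaving `out(a, t)` can only move up the out-chain of `a` before it crosses a
temporal edge, so it crosses one starting at `a` no earlier than `t`. -/
theorem exists_edge_of_reflTransGen_out_inn {a b : V} {t t' : ℕ}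
    (h : ReflTransGen (GEdge E) (.out a t) (.inn b t')) :
    ∃ c s l, (a, c, s, l) ∈ E ∧ t ≤ s ∧
      ReflTransGen (GEdge E) (.inn c (s + l)) (.inn b t') := by
  generalize hx : Copy.out a t = x at h
  induction h using ReflTransGen.head_induction_on generalizing t with
  | refl => cases hx
  | head hedge hpath ih =>
    subst hx
    cases hedge with
    | out_out _ _ hlt _ =>
      obtain ⟨c, s, l, he, hle, hreach⟩ := ih rfl
      exact ⟨c, s, l, he, hlt.le.trans hle, hreach⟩
    | cross he => exact ⟨_, _, _, he, le_rfl, hpath⟩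

end

theorem reach_out_in_same_vertex_iff_general {V : Type*} (E : Finset (V × V × ℕ × ℕ))
    (a : V) (t t' : ℕ) (ht : t ∈ Tout E a) :
    Relation.ReflTransGen (GEdge E) (.out a t) (.inn a t') ↔
      ∃ c s l, (a, c, s, l) ∈ E ∧ t ≤ s ∧
        Relation.ReflTransGen (GEdge E) (.inn c (s + l)) (.inn a t') := by
  refine ⟨exists_edge_of_reflTransGen_out_inn, ?_⟩
  rintro ⟨c, s, l, he, hts, hpath⟩
  exact ((reflTransGen_out_of_le ht ⟨c, l, he⟩ hts).tail (.cross he)).trans hpath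

theorem reach_out_in_same_vertex_iff {V : Type*} (E : Finset (V × V × ℕ × ℕ))
    (hns : ∀ u v t l, (u, v, t, l) ∈ E → u ≠ v)
    (a : V) (t t' : ℕ) (ht : t ∈ Tout E a) (ht' : t' ∈ Tin E a) :
    Relation.ReflTransGen (GEdge E) (.out a t) (.inn a t') ↔
      ∃ c s l, (a, c, s, l) ∈ E ∧ t ≤ s ∧
        Relation.ReflTransGen (GEdge E) (.inn c (s + l)) (.inn a t') :=
  reach_out_in_same_vertex_iff_general E a t t' ht
end
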